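/- Let (𝒜, ℱ) be a subshift of finite type on ℤ^d. If player A has a winning strategy in the Domino game Γ(𝒜, ℱ, ℤ^d), then the game value is finite: there exists T ∈ ℕ such that A has a strategy guaranteeing a win within T moves. Moreover there exists n ∈ ℕ such that A has a winning strategy that only ever plays cells inside the box ⟦−n, n⟧^d. -/

import Mathlib

open Filter Topology

attribute [local instance] Classical.propDecidable

/-- The two players. -/
inductive Player | A | B
deriving DecidableEq

/-- A cell of the grid `ℤ^d`. -/
abbrev Cell (d : ℕ) := Fin d → ℤ

/-- A (possibly partial) colouring of the grid: `none` means uncoloured.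
Colours are natural numbers; the alphabet of size `m` is `{0, …, m-1}`. -/
abbrev Board (d : ℕ) := Cell d → Option ℕ

/-- A finite pattern, encoded as a list of tiles (cell, colour). -/
abbrev PatternCode (d : ℕ) := List (Cell d × ℕ)

/-- A move: `none` is a pass, `some (i, a)` colours cell `i` with colour `a`. -/
abbrev MoveD (d : ℕ) := Option (Cell d × ℕ)

/-- Code for an SFT: alphabet size together with the list of forbidden patterns. -/
abbrev SFTCode (d : ℕ) := ℕ × List (PatternCode d)

/-- A (positional) strategy: a move for every position. -/
abbrev Strategy (d : ℕ) := Board d → MoveD d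

def emptyBoard (d : ℕ) : Board d := fun _ => none

/-- The pattern `p` occurs in the board `x` translated by `t`. -/
def occursAt {d : ℕ} (p : PatternCode d) (x : Board d) (t : Cell d) : Prop :=
  ∀ q ∈ p, x (t + q.1) = some q.2

/-- A position is final when a translate of some forbidden pattern occurs. -/
def isFinal {d : ℕ} (F : List (PatternCode d)) (x : Board d) : Prop :=
  ∃ p ∈ F, ∃ t : Cell d, occursAt p x t

/-- Legality of a move in the game with alphabet `{0,…,m-1}` played on `E`:
a pass is always legal, and a colouring move must pick an uncoloured cell of `E`
and a colour of the alphabet. -/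
def legalMove {d : ℕ} (m : ℕ) (E : Set (Cell d)) (x : Board d) : MoveD d → Prop
  | none => True
  | some (i, a) => i ∈ E ∧ x i = none ∧ a < m

def applyMove {d : ℕ} (x : Board d) : MoveD d → Board d
  | none => x
  | some (i, a) => Function.update x i (some a)

/-- One step of the game: the move proposed by the strategy is played if legal
(an illegal move is treated as a pass). -/
noncomputable def step {d : ℕ} (m : ℕ) (E : Set (Cell d)) (st : Strategy d)
    (x : Board d) : Board d :=
  if legalMove m E x (st x) then applyMove x (st x) else x

/-- The play generated by strategies `stA`, `stB` with turn order `s`,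
starting from the empty board. -/
noncomputable def play {d : ℕ} (m : ℕ) (E : Set (Cell d)) (s : ℕ → Player)
    (stA stB : Strategy d) : ℕ → Board d
  | 0 => emptyBoard d
  | t + 1 => step m E (match s t with | .A => stA | .B => stB) (play m E s stA stB t)

/-- The alternating turn order: `A` plays first. -/
def alt : ℕ → Player := fun t => if t % 2 = 0 then .A else .B

/-- Player `A` has a winning strategy in the Domino game with turn order `s`:
a final position is eventually reached whatever `B` plays. -/
def AWins {d : ℕ} (m : ℕ) (F : List (PatternCode d)) (E : Set (Cell d))
    (s : ℕ → Player) : Prop :=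
  ∃ stA : Strategy d, ∀ stB : Strategy d, ∃ t : ℕ, isFinal F (play m E s stA stB t)

/-- Player `B` has a winning strategy in the Domino game with turn order `s`:
a final position is never reached whatever `A` plays. -/
def BWins {d : ℕ} (m : ℕ) (F : List (PatternCode d)) (E : Set (Cell d))
    (s : ℕ → Player) : Prop :=
  ∃ stB : Strategy d, ∀ stA : Strategy d, ∀ t : ℕ, ¬ isFinal F (play m E s stA stB t)

/-- The Domino game problem on `ℤ^d` (alternating turn order, `A` first). -/
def DGame (d : ℕ) : SFTCode d → Prop :=
  fun c => AWins c.1 c.2 Set.univ alt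

/-- The finite box `⟦-n, n⟧^d` of cells of `ℤ^d`. -/
def box (d n : ℕ) : Set (Cell d) := {i | ∀ k, |i k| ≤ (n : ℤ)}


/-!
Two ideas. *Compactness*: if `A` cannot force a final position within a bounded number of
rounds, neither can it after some reply of `B`, because the replies far from the coloured cells
are no better for `B` than passing and only finitely many replies are close; by always choosing
such a reply, `B` defeats every strategy of `A`. *Translation invariance*: a game in which `A`
forces a final position within `K` rounds can be replayed inside a box, copying each cluster of
coloured cells by a translation and moves far from all clusters to fresh cells far away. The
resolution at which clusters are recognised shrinks by a factor `4` per round and always exceeds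
the diameter of the forbidden patterns, so the copy becomes final when the original does.
-/

namespace DominoGame

open Function

variable {d : ℕ}

section Geometry

def cellDist (u v : Cell d) : ℕ := Finset.univ.sup fun k => (u k - v k).natAbs

lemma cellDist_le_iff {u v : Cell d} {r : ℕ} :
    cellDist u v ≤ r ↔ ∀ k, (u k - v k).natAbs ≤ r := by
  simp [cellDist, Finset.sup_le_iff]

lemma natAbs_sub_le_cellDist (u v : Cell d) (k : Fin d) : (u k - v k).natAbs ≤ cellDist u v :=
  cellDist_le_iff.1 le_rfl k

@[simp]
lemma cellDist_self (u : Cell d) : cellDist u u = 0 := by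
  simp [cellDist]

lemma cellDist_comm (u v : Cell d) : cellDist u v = cellDist v u := by
  unfold cellDist
  congr 1
  funext k
  rw [← Int.natAbs_neg, neg_sub]

lemma cellDist_triangle (u v w : Cell d) : cellDist u w ≤ cellDist u v + cellDist v w :=
  cellDist_le_iff.2 fun k => by
    have := natAbs_sub_le_cellDist u v k
    have := natAbs_sub_le_cellDist v w k
    omega

lemma cellDist_congr {u v u' v' : Cell d} (h : u - v = u' - v') :
    cellDist u v = cellDist u' v' := by
  unfold cellDist
  congr 1
  funext k
  rw [← Pi.sub_apply, h, Pi.sub_apply]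

lemma cellDist_add_sub_left (w u v : Cell d) : cellDist (w + (u - v)) w = cellDist u v :=
  cellDist_congr (by abel)

lemma mem_box_iff {n : ℕ} {i : Cell d} : i ∈ box d n ↔ ∀ k, (i k).natAbs ≤ n := by
  show (∀ k, |i k| ≤ n) ↔ _
  exact forall_congr' fun k => by rw [abs_le]; omega

lemma mem_box_of_cellDist_le {n r : ℕ} {u w : Cell d} (hu : u ∈ box d n)
    (h : cellDist w u ≤ r) : w ∈ box d (n + r) :=
  mem_box_iff.2 fun k => by
    have := mem_box_iff.1 hu k
    have := natAbs_sub_le_cellDist w u k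
    omega

lemma box_mono : Monotone (box d) := fun _ _ h _ hi =>
  mem_box_iff.2 fun k => (mem_box_iff.1 hi k).trans h

lemma finite_setOf_cellDist_le (u : Cell d) (r : ℕ) : {i | cellDist i u ≤ r}.Finite :=
  (Set.Finite.pi fun k => Set.finite_Icc (u k - r) (u k + r)).subset fun i hi => by
    simp only [Set.mem_pi, Set.mem_univ, Set.mem_Icc, true_implies]
    intro k
    have := cellDist_le_iff.1 hi k
    omega

/-- Room in a box: the first coordinate takes `2n + 1` values in `⟦-n, n⟧`, of which each
cell of `S` rules out at most `2r + 1`. -/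
lemma exists_far_mem_box (hd : 0 < d) (S : Finset (Cell d)) {r n : ℕ}
    (h : S.card * (2 * r + 1) ≤ 2 * n) :
    ∃ i ∈ box d n, ∀ p ∈ S, r < cellDist i p := by
  classical
  let k₀ : Fin d := ⟨0, hd⟩
  let bad : Finset ℤ := S.biUnion fun p => Finset.Icc (p k₀ - r) (p k₀ + r)
  have hbad : bad.card < (Finset.Icc (-(n : ℤ)) n).card := by
    calc bad.card ≤ ∑ p ∈ S, (Finset.Icc (p k₀ - r) (p k₀ + r)).card :=
          Finset.card_biUnion_le
      _ = S.card * (2 * r + 1) := Finset.sum_const_nat fun p _ => by rw [Int.card_Icc]; omega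
      _ < (Finset.Icc (-(n : ℤ)) n).card := by
        rw [Int.card_Icc]; generalize S.card * (2 * r + 1) = c at h ⊢; omega
  obtain ⟨x, hx, hxbad⟩ := Finset.exists_mem_notMem_of_card_lt_card hbad
  refine ⟨Pi.single k₀ x, mem_box_iff.2 fun k => ?_, fun p hp => ?_⟩
  · rw [Finset.mem_Icc] at hx
    by_cases hk : k = k₀
    · subst hk; rw [Pi.single_eq_same]; omega
    · simp [hk]
  · have hfar : x ∉ Finset.Icc (p k₀ - r) (p k₀ + r) := fun hmem =>
      hxbad (Finset.mem_biUnion.2 ⟨p, hp, hmem⟩)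
    have := natAbs_sub_le_cellDist (Pi.single k₀ x) p k₀
    rw [Finset.mem_Icc] at hfar
    simp only [Pi.single_eq_same] at this
    omega

def patternRadius (F : List (PatternCode d)) : ℕ := (F.flatten.map fun q => cellDist q.1 0).sum

lemma cellDist_le_patternRadius {F : List (PatternCode d)} {p : PatternCode d}
    {q : Cell d × ℕ} (hp : p ∈ F) (hq : q ∈ p) : cellDist q.1 0 ≤ patternRadius F :=
  List.le_sum_of_mem (List.mem_map_of_mem (List.mem_flatten_of_mem hp hq))

/-- Each round uses up a factor `4` of the scale: `2` for the move of `A`, `2` for the reply. -/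
def scale (R j : ℕ) : ℕ := 2 * R * 4 ^ j

lemma scale_succ (R j : ℕ) : scale R (j + 1) = 4 * scale R j := by
  unfold scale; ring

lemma two_mul_le_scale (R j : ℕ) : 2 * R ≤ scale R j :=
  Nat.le_mul_of_pos_right _ (by positivity)

lemma scale_mono (R : ℕ) : Monotone (scale R) := fun _ _ h =>
  Nat.mul_le_mul_left _ (Nat.pow_le_pow_right (by norm_num) h)

end Geometry

section Play

variable {m : ℕ} {E : Set (Cell d)} {F : List (PatternCode d)}

def coloured (x : Board d) : Set (Cell d) := {i | x i ≠ none}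

@[simp]
lemma mem_coloured {x : Board d} {i : Cell d} : i ∈ coloured x ↔ x i ≠ none := Iff.rfl

lemma coloured_update (x : Board d) (i : Cell d) (c : ℕ) :
    coloured (update x i (some c)) = insert i (coloured x) := by
  ext w
  by_cases h : w = i <;> simp [h]

@[simp]
lemma coloured_emptyBoard : coloured (emptyBoard d) = ∅ := by
  ext; simp [emptyBoard]

@[simp]
lemma applyMove_some (x : Board d) (i : Cell d) (c : ℕ) :
    applyMove x (some (i, c)) = update x i (some c) := rfl

lemma exists_coloured_applyMove_subset (x : Board d) (b : MoveD d) :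
    ∃ w, coloured (applyMove x b) ⊆ insert w (coloured x) := by
  rcases b with _ | ⟨i, c⟩
  · exact ⟨0, Set.subset_insert _ _⟩
  · exact ⟨i, (coloured_update x i c).le⟩

lemma legalMove_mono {E' : Set (Cell d)} (hE : E ⊆ E') {x : Board d} {b : MoveD d}
    (h : legalMove m E x b) : legalMove m E' x b := by
  rcases b with _ | ⟨i, c⟩
  · trivial
  · exact ⟨hE h.1, h.2⟩

lemma applyMove_eq_some {x : Board d} {b : MoveD d} (hb : legalMove m E x b) {i : Cell d}
    {a : ℕ} (hi : x i = some a) : applyMove x b i = some a := by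
  rcases b with _ | ⟨j, c⟩
  · exact hi
  · have hij : i ≠ j := by rintro rfl; simp [hb.2.1] at hi
    simpa [hij] using hi

lemma isFinal_mono {x y : Board d} (hxy : ∀ i a, x i = some a → y i = some a)
    (h : isFinal F x) : isFinal F y := by
  obtain ⟨p, hp, t, ho⟩ := h
  exact ⟨p, hp, t, fun q hq => hxy _ _ (ho q hq)⟩

lemma isFinal_applyMove {x : Board d} {b : MoveD d} (hb : legalMove m E x b)
    (h : isFinal F x) : isFinal F (applyMove x b) :=
  isFinal_mono (fun _ _ => applyMove_eq_some hb) h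

lemma step_eq_applyMove {st : Strategy d} {x : Board d} (h : legalMove m E x (st x)) :
    step m E st x = applyMove x (st x) :=
  if_pos h

lemma exists_legalMove_step_eq (st : Strategy d) (x : Board d) :
    ∃ b, legalMove m E x b ∧ step m E st x = applyMove x b := by
  by_cases h : legalMove m E x (st x)
  · exact ⟨st x, h, if_pos h⟩
  · exact ⟨none, trivial, if_neg h⟩

lemma play_two_mul_add_one (stA stB : Strategy d) (j : ℕ) :
    play m E alt stA stB (2 * j + 1) = step m E stA (play m E alt stA stB (2 * j)) := by
  simp [play, alt]

lemma play_two_mul_add_two (stA stB : Strategy d) (j : ℕ) :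
    play m E alt stA stB (2 * j + 2) = step m E stB (play m E alt stA stB (2 * j + 1)) := by
  have : (2 * j + 1) % 2 = 1 := by omega
  simp [play, alt, this]

lemma finite_coloured_play (s : ℕ → Player) (stA stB : Strategy d) (t : ℕ) :
    (coloured (play m E s stA stB t)).Finite := by
  induction t with
  | zero => simp [play]
  | succ t ih =>
    obtain ⟨b, -, hb⟩ := exists_legalMove_step_eq (m := m) (E := E)
      (match s t with | .A => stA | .B => stB) (play m E s stA stB t)
    obtain ⟨w, hw⟩ := exists_coloured_applyMove_subset (play m E s stA stB t) b
    rw [play, hb]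
    exact (ih.insert w).subset hw

lemma lt_of_play_eq_some (s : ℕ → Player) (stA stB : Strategy d) (t : ℕ) {i : Cell d}
    {a : ℕ} (h : play m E s stA stB t i = some a) : a < m := by
  induction t generalizing a with
  | zero => simp [play, emptyBoard] at h
  | succ t ih =>
    obtain ⟨b, hb, hstep⟩ := exists_legalMove_step_eq (m := m) (E := E)
      (match s t with | .A => stA | .B => stB) (play m E s stA stB t)
    rw [play, hstep] at h
    rcases b with _ | ⟨j, c⟩
    · exact ih h
    · by_cases hij : i = j
      · subst hij
        rw [applyMove_some, update_self, Option.some_inj] at h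
        exact h ▸ hb.2.2
      · exact ih (by simpa [hij] using h)

end Play

section Forcing

variable {m : ℕ} {F : List (PatternCode d)} {EA : Set (Cell d)}

/-- `Forces m F EA k x`: from the position `x`, with `A` to move, `A` can reach a final
position within `k` rounds while only colouring cells of `EA`, whatever `B` plays on `ℤ^d`. -/
def Forces (m : ℕ) (F : List (PatternCode d)) (EA : Set (Cell d)) : ℕ → Board d → Prop
  | 0, x => isFinal F x
  | k + 1, x => isFinal F x ∨ ∃ a, legalMove m EA x a ∧
      ∀ b, legalMove m Set.univ (applyMove x a) b →
        Forces m F EA k (applyMove (applyMove x a) b)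

lemma Forces.of_isFinal {x : Board d} (h : isFinal F x) : ∀ k, Forces m F EA k x
  | 0 => h
  | _ + 1 => Or.inl h

lemma Forces.mono {x : Board d} {k k' : ℕ} (hk : k ≤ k') (h : Forces m F EA k x) :
    Forces m F EA k' x := by
  induction k generalizing x k' with
  | zero => exact Forces.of_isFinal h k'
  | succ k ih =>
    obtain ⟨k', rfl⟩ := Nat.exists_eq_add_of_le' (Nat.one_le_of_lt hk)
    exact h.imp id fun ⟨a, ha, hb⟩ => ⟨a, ha, fun b hbl => ih (by omega) (hb b hbl)⟩

/-- Positional strategies cannot count rounds, so a forcing move has to make progress for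
every bound `k` at once. -/
def IsForcingMove (m : ℕ) (F : List (PatternCode d)) (EA : Set (Cell d)) (x : Board d)
    (a : MoveD d) : Prop :=
  legalMove m EA x a ∧ ∀ k, Forces m F EA (k + 1) x →
    ∀ b, legalMove m Set.univ (applyMove x a) b → Forces m F EA k (applyMove (applyMove x a) b)

/-- A move realising the least number of rounds realises every larger one too. -/
lemma exists_isForcingMove {x : Board d} (h : ∃ k, Forces m F EA k x) :
    ∃ a, IsForcingMove m F EA x a := by
  classical
  by_cases hf : isFinal F x
  · exact ⟨none, trivial, fun k _ b hb => Forces.of_isFinal (isFinal_applyMove hb hf) k⟩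
  obtain ⟨k₀, hk₀⟩ : ∃ k₀, Nat.find h = k₀ + 1 :=
    Nat.exists_eq_add_of_le' (Nat.one_le_iff_ne_zero.2 fun h0 => hf (by
      have := Nat.find_spec h; rwa [h0] at this))
  have hspec := Nat.find_spec h
  rw [hk₀] at hspec
  obtain ⟨a, ha, hb⟩ := hspec.resolve_left hf
  refine ⟨a, ha, fun k hk b hbl => (hb b hbl).mono ?_⟩
  have := Nat.find_min' h hk
  omega

noncomputable def forcingStrategy (m : ℕ) (F : List (PatternCode d)) (EA : Set (Cell d)) :
    Strategy d := fun x =>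
  open Classical in
  if h : ∃ a, IsForcingMove m F EA x a then h.choose else none

lemma isForcingMove_forcingStrategy {x : Board d} {k : ℕ} (h : Forces m F EA k x) :
    IsForcingMove m F EA x (forcingStrategy m F EA x) := by
  have hex := exists_isForcingMove ⟨k, h⟩
  simpa [forcingStrategy, hex] using hex.choose_spec

lemma forcingStrategy_mem {x : Board d} {i : Cell d} {c : ℕ}
    (h : forcingStrategy m F EA x = some (i, c)) : i ∈ EA := by
  by_cases hex : ∃ a, IsForcingMove m F EA x a
  · have hspec := hex.choose_spec.1
    simp only [forcingStrategy, hex, dite_true] at h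
    rw [h] at hspec
    exact hspec.1
  · simp [forcingStrategy, hex] at h

lemma forces_play_forcingStrategy {K : ℕ} (h : Forces m F EA K (emptyBoard d))
    (stB : Strategy d) {j : ℕ} (hj : j ≤ K) :
    Forces m F EA (K - j) (play m Set.univ alt (forcingStrategy m F EA) stB (2 * j)) := by
  induction j with
  | zero => exact h
  | succ j ih =>
    set x := play m Set.univ alt (forcingStrategy m F EA) stB (2 * j)
    have hx : Forces m F EA (K - (j + 1) + 1) x := by
      rw [show K - (j + 1) + 1 = K - j by omega]; exact ih (by omega)
    have hA := isForcingMove_forcingStrategy hx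
    have hodd : play m Set.univ alt (forcingStrategy m F EA) stB (2 * j + 1) =
        applyMove x (forcingStrategy m F EA x) := by
      rw [play_two_mul_add_one, step_eq_applyMove (legalMove_mono (Set.subset_univ _) hA.1)]
    obtain ⟨b, hb, hstep⟩ := exists_legalMove_step_eq (m := m) (E := Set.univ) stB
      (play m Set.univ alt (forcingStrategy m F EA) stB (2 * j + 1))
    rw [show 2 * (j + 1) = 2 * j + 2 by ring, play_two_mul_add_two, hstep, hodd]
    exact hA.2 _ hx b (hodd ▸ hb)

lemma isFinal_play_forcingStrategy {K : ℕ} (h : Forces m F EA K (emptyBoard d))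
    (stB : Strategy d) :
    isFinal F (play m Set.univ alt (forcingStrategy m F EA) stB (2 * K)) := by
  have := forces_play_forcingStrategy h stB le_rfl
  rwa [Nat.sub_self] at this

end Forcing

section Simulation

variable {σ σ' : ℕ} {φ : Cell d → Cell d} {z z' : Board d}

/-- `z'` is a copy of `z`, translated cluster by cluster by `φ`, plus isolated junk; `σ` is the
resolution at which clusters are told apart. -/
structure Simulates (σ : ℕ) (φ : Cell d → Cell d) (z z' : Board d) : Prop where
  apply_eq : ∀ u ∈ coloured z, z' (φ u) = z u
  sub_eq : ∀ u ∈ coloured z, ∀ v ∈ coloured z, cellDist u v ≤ σ → φ u - φ v = u - v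
  sub_eq' : ∀ u ∈ coloured z, ∀ v ∈ coloured z,
    cellDist (φ u) (φ v) ≤ σ → φ u - φ v = u - v
  isolated : ∀ w ∈ coloured z',
    w ∈ φ '' coloured z ∨ ∀ u ∈ coloured z, σ < cellDist w (φ u)

namespace Simulates

lemma mono (hs : Simulates σ φ z z') (h : σ' ≤ σ) : Simulates σ' φ z z' where
  apply_eq := hs.apply_eq
  sub_eq u hu v hv huv := hs.sub_eq u hu v hv (huv.trans h)
  sub_eq' u hu v hv huv := hs.sub_eq' u hu v hv (huv.trans h)
  isolated w hw := (hs.isolated w hw).imp_right fun hfar u hu => h.trans_lt (hfar u hu)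

lemma mem_coloured (hs : Simulates σ φ z z') {u : Cell d} (hu : u ∈ coloured z) :
    φ u ∈ coloured z' := by
  rw [DominoGame.mem_coloured, hs.apply_eq u hu]
  exact hu

/-- An occurrence of a pattern has diameter at most `2 * patternRadius F`, so `φ` translates it
rigidly. -/
lemma isFinal {F : List (PatternCode d)} (hs : Simulates σ φ z z')
    (hσ : 2 * patternRadius F ≤ σ) (h : isFinal F z) : isFinal F z' := by
  obtain ⟨p, hp, t, ho⟩ := h
  rcases p with _ | ⟨q₀, p⟩
  · exact ⟨[], hp, 0, by simp [occursAt]⟩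
  have hcol : ∀ q ∈ q₀ :: p, t + q.1 ∈ coloured z := fun q hq => by simp [ho q hq]
  refine ⟨q₀ :: p, hp, φ (t + q₀.1) - q₀.1, fun q hq => ?_⟩
  have hclose : cellDist (t + q.1) (t + q₀.1) ≤ σ := by
    rw [cellDist_congr (u' := q.1) (v' := q₀.1) (by abel)]
    have := cellDist_triangle q.1 0 q₀.1
    have := cellDist_le_patternRadius hp hq
    have := cellDist_le_patternRadius hp List.mem_cons_self
    rw [cellDist_comm 0] at *
    omega
  have hφ := hs.sub_eq _ (hcol q hq) _ (hcol q₀ List.mem_cons_self) hclose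
  rw [show φ (t + q₀.1) - q₀.1 + q.1 = φ (t + q.1) by linear_combination -hφ,
    hs.apply_eq _ (hcol q hq), ho q hq]

lemma update_update (hs : Simulates σ φ z z') (hσ : σ' ≤ σ) {u w₀ : Cell d}
    (hu : u ∉ coloured z) (hw₀ : w₀ ∉ coloured z')
    (hnear : ∀ v ∈ coloured z, cellDist u v ≤ σ' → w₀ - φ v = u - v)
    (hnear' : ∀ v ∈ coloured z, cellDist w₀ (φ v) ≤ σ' → w₀ - φ v = u - v)
    (hfar : ∀ w ∈ coloured z', (∀ v ∈ coloured z, σ < cellDist w (φ v)) →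
      σ' < cellDist w w₀)
    (c : ℕ) :
    Simulates σ' (update φ u w₀) (update z u (some c)) (update z' w₀ (some c)) := by
  have hne : ∀ {p}, p ∈ coloured z → p ≠ u := fun hp h => hu (h ▸ hp)
  refine ⟨fun p hp => ?_, fun p hp q hq hpq => ?_, fun p hp q hq hpq => ?_, fun w hw => ?_⟩
  · rw [coloured_update] at hp
    obtain rfl | hp := hp
    · simp
    · have : φ p ≠ w₀ := fun h => hw₀ (h ▸ hs.mem_coloured hp)
      simp [hne hp, this, hs.apply_eq p hp]
  · rw [coloured_update] at hp hq
    obtain rfl | hp := hp <;> obtain rfl | hq := hq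
    · simp
    · simpa [hne hq] using hnear q hq hpq
    · rw [cellDist_comm] at hpq
      simpa [hne hp] using congrArg Neg.neg (hnear p hp hpq)
    · simpa [hne hp, hne hq] using hs.sub_eq p hp q hq (hpq.trans hσ)
  · rw [coloured_update] at hp hq
    obtain rfl | hp := hp <;> obtain rfl | hq := hq
    · simp
    · simp only [update_self, update_of_ne (hne hq)] at hpq ⊢
      exact hnear' q hq hpq
    · simp only [update_self, update_of_ne (hne hp)] at hpq ⊢
      rw [cellDist_comm] at hpq
      simpa using congrArg Neg.neg (hnear' p hp hpq)
    · simp only [update_of_ne (hne hp), update_of_ne (hne hq)] at hpq ⊢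
      exact hs.sub_eq' p hp q hq (hpq.trans hσ)
  · rw [coloured_update] at hw
    by_cases hww : w = w₀
    · exact Or.inl ⟨u, by simp [coloured_update], by simp [hww]⟩
    have hw' : w ∈ coloured z' := hw.resolve_left hww
    rcases hs.isolated w hw' with ⟨p, hp, rfl⟩ | hfar'
    · exact Or.inl ⟨p, by simp [coloured_update, hp], by simp [hne hp]⟩
    · refine Or.inr fun p hp => ?_
      rw [coloured_update] at hp
      obtain rfl | hp := hp
      · simpa using hfar w hw' hfar'
      · simpa [hne hp] using hσ.trans_lt (hfar' p hp)

lemma update_update_of_near (hs : Simulates σ φ z z') {u v₀ : Cell d}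
    (hv₀ : v₀ ∈ coloured z) (hu : u ∉ coloured z) (hσ : σ' + cellDist u v₀ ≤ σ)
    (c : ℕ) :
    φ v₀ + (u - v₀) ∉ coloured z' ∧
      Simulates σ' (update φ u (φ v₀ + (u - v₀))) (update z u (some c))
        (update z' (φ v₀ + (u - v₀)) (some c)) := by
  set w₀ := φ v₀ + (u - v₀)
  have hw₀ : cellDist w₀ (φ v₀) = cellDist u v₀ := cellDist_add_sub_left _ _ _
  have htrans : ∀ v, φ v₀ - φ v = v₀ - v → w₀ - φ v = u - v := fun v h => by
    simp only [w₀]; linear_combination h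
  have hfree : w₀ ∉ coloured z' := by
    intro hw
    rcases hs.isolated w₀ hw with ⟨p, hp, hpw⟩ | hfar
    · have := hs.sub_eq' p hp v₀ hv₀ (by rw [hpw, hw₀]; omega)
      have hpu : p = u := by simp only [hpw, w₀] at this; linear_combination -this
      exact hu (hpu ▸ hp)
    · have := hfar v₀ hv₀
      omega
  refine ⟨hfree, hs.update_update (by omega) hu hfree (fun v hv hv' => htrans v ?_)
    (fun v hv hv' => htrans v ?_) (fun w _ hfar => ?_) c⟩
  · refine hs.sub_eq v₀ hv₀ v hv ?_
    have := cellDist_triangle v₀ u v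
    rw [cellDist_comm v₀ u] at this
    omega
  · refine hs.sub_eq' v₀ hv₀ v hv ?_
    have := cellDist_triangle (φ v₀) w₀ (φ v)
    rw [cellDist_comm (φ v₀) w₀, hw₀] at this
    omega
  · have := cellDist_triangle w w₀ (φ v₀)
    have := hfar v₀ hv₀
    omega

lemma update_update_of_far (hs : Simulates σ φ z z') (hσ : σ' ≤ σ) {u i : Cell d}
    (hu : u ∉ coloured z) (hfar_u : ∀ v ∈ coloured z, σ' < cellDist u v)
    (hfar_i : ∀ w ∈ coloured z', σ < cellDist i w) (c : ℕ) :
    i ∉ coloured z' ∧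
      Simulates σ' (update φ u i) (update z u (some c)) (update z' i (some c)) := by
  have hfree : i ∉ coloured z' := fun hi => by simpa using hfar_i i hi
  refine ⟨hfree, hs.update_update hσ hu hfree (fun v hv h => absurd h (hfar_u v hv).not_ge)
    (fun v hv h => absurd h ?_) (fun w hw _ => ?_) c⟩
  · have := hfar_i _ (hs.mem_coloured hv)
    omega
  · rw [cellDist_comm]
    exact hσ.trans_lt (hfar_i w hw)

lemma update_right (hs : Simulates σ φ z z') (hσ : σ' ≤ σ) {w₀ : Cell d}
    (hw₀ : w₀ ∉ coloured z') (hfar : ∀ v ∈ coloured z, σ' < cellDist w₀ (φ v))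
    (c : ℕ) :
    Simulates σ' φ z (update z' w₀ (some c)) where
  apply_eq u hu := by
    have : φ u ≠ w₀ := fun h => hw₀ (h ▸ hs.mem_coloured hu)
    simp [this, hs.apply_eq u hu]
  sub_eq u hu v hv huv := hs.sub_eq u hu v hv (huv.trans hσ)
  sub_eq' u hu v hv huv := hs.sub_eq' u hu v hv (huv.trans hσ)
  isolated w hw := by
    rw [coloured_update] at hw
    obtain rfl | hw := hw
    · exact Or.inr hfar
    · exact (hs.isolated w hw).imp_right fun h u hu => hσ.trans_lt (h u hu)

end Simulates

end Simulation

section Transfer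

variable {m ρ : ℕ} {C C' : Set (Cell d)} {φ : Cell d → Cell d} {z z' : Board d}

/-- A move of `A` in `z` is copied next to the copy of a coloured cell close to it if there is
one, and otherwise to a cell of `C` far from everything coloured in `z'`. -/
lemma Simulates.exists_move (hs : Simulates (4 * ρ) φ z z')
    (him : ∀ u ∈ coloured z, φ u ∈ C)
    (hC : ∀ u ∈ C, ∀ w, cellDist w u ≤ 4 * ρ → w ∈ C')
    (hroom : ∃ i ∈ C, ∀ w ∈ coloured z', 4 * ρ < cellDist i w)
    {a : MoveD d} (ha : legalMove m Set.univ z a) :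
    ∃ a' φ', legalMove m C' z' a' ∧
      Simulates (2 * ρ) φ' (applyMove z a) (applyMove z' a') ∧
      ∀ w ∈ coloured (applyMove z a), ∃ u ∈ C, cellDist (φ' w) u ≤ 2 * ρ := by
  rcases a with _ | ⟨u, c⟩
  · exact ⟨none, φ, trivial, hs.mono (by omega), fun w hw => ⟨φ w, him w hw, by simp⟩⟩
  obtain ⟨-, hu, hc⟩ := ha
  replace hu : u ∉ coloured z := by simpa using hu
  have hanch : ∀ w₀, (∃ x ∈ C, cellDist w₀ x ≤ 2 * ρ) →
      ∀ w ∈ coloured (applyMove z (some (u, c))),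
        ∃ x ∈ C, cellDist (update φ u w₀ w) x ≤ 2 * ρ := by
    intro w₀ hw₀ w hw
    rw [applyMove_some, coloured_update] at hw
    obtain rfl | hw := hw
    · simpa using hw₀
    · exact ⟨φ w, him w hw, by simp [show w ≠ u from fun h => hu (h ▸ hw)]⟩
  by_cases hnear : ∃ v ∈ coloured z, cellDist u v ≤ 2 * ρ
  · obtain ⟨v, hv, huv⟩ := hnear
    obtain ⟨hfree, hs'⟩ := hs.update_update_of_near hv hu (σ' := 2 * ρ) (by omega) c
    have hclose : cellDist (φ v + (u - v)) (φ v) ≤ 2 * ρ := by rwa [cellDist_add_sub_left]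
    exact ⟨some (φ v + (u - v), c), _,
      ⟨hC _ (him v hv) _ (by omega), by simpa using hfree, hc⟩, hs',
      hanch _ ⟨φ v, him v hv, hclose⟩⟩
  · push Not at hnear
    obtain ⟨i, hiC, hi⟩ := hroom
    obtain ⟨hfree, hs'⟩ := hs.update_update_of_far (σ' := 2 * ρ) (by omega) hu hnear hi c
    exact ⟨some (i, c), _, ⟨hC i hiC i (by simp), by simpa using hfree, hc⟩, hs',
      hanch _ ⟨i, hiC, by simp⟩⟩

/-- A reply of `B` in `z'` is pulled back to `z` if it is close to the copy of `z`; otherwise it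
stays isolated and `B` passes in `z`. -/
lemma Simulates.exists_reply (hs : Simulates (2 * ρ) φ z z')
    (hanch : ∀ w ∈ coloured z, ∃ u ∈ C, cellDist (φ w) u ≤ 2 * ρ)
    (hC : ∀ u ∈ C, ∀ w, cellDist w u ≤ 4 * ρ → w ∈ C')
    {b' : MoveD d} (hb' : legalMove m Set.univ z' b') :
    ∃ b φ', legalMove m Set.univ z b ∧ Simulates ρ φ' (applyMove z b) (applyMove z' b') ∧
      ∀ w ∈ coloured (applyMove z b), φ' w ∈ C' := by
  have him : ∀ w ∈ coloured z, φ w ∈ C' := fun w hw => by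
    obtain ⟨u, hu, hwu⟩ := hanch w hw
    exact hC u hu _ (by omega)
  rcases b' with _ | ⟨w', c⟩
  · exact ⟨none, φ, trivial, hs.mono (by omega), him⟩
  obtain ⟨-, hw', hc⟩ := hb'
  replace hw' : w' ∉ coloured z' := by simpa using hw'
  by_cases hnear : ∃ v ∈ coloured z, cellDist w' (φ v) ≤ ρ
  · obtain ⟨v, hv, hw'v⟩ := hnear
    set u := v + (w' - φ v)
    have huv : cellDist u v = cellDist w' (φ v) := cellDist_add_sub_left _ _ _
    have hcopy : φ v + (u - v) = w' := by simp only [u]; abel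
    have hu : u ∉ coloured z := fun hu => by
      have hφu : φ u = w' := by
        linear_combination hs.sub_eq u hu v hv (by omega) + hcopy
      exact hw' (hφu ▸ hs.mem_coloured hu)
    obtain ⟨-, hs'⟩ := hs.update_update_of_near hv hu (σ' := ρ) (by omega) c
    rw [hcopy] at hs'
    refine ⟨some (u, c), _, ⟨trivial, by simpa using hu, hc⟩, hs', fun w hw => ?_⟩
    rw [applyMove_some, coloured_update] at hw
    obtain rfl | hw := hw
    · obtain ⟨x, hx, hvx⟩ := hanch v hv
      have := cellDist_triangle w' (φ v) x
      simpa using hC x hx w' (by omega)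
    · simpa [show w ≠ u from fun h => hu (h ▸ hw)] using him w hw
  · push Not at hnear
    exact ⟨none, φ, trivial, hs.update_right (by omega) hw' hnear c, him⟩

theorem Forces.of_simulates {F : List (PatternCode d)} {EA : Set (Cell d)}
    {C : ℕ → Set (Cell d)} {K SZ : ℕ} (hCE : ∀ j, C j ⊆ EA)
    (hC : ∀ j < K, ∀ u ∈ C (j + 1), ∀ w,
      cellDist w u ≤ scale (patternRadius F) (j + 1) → w ∈ C j)
    (hroom : ∀ j ≤ K, ∀ S : Finset (Cell d), S.card ≤ SZ →
      ∃ i ∈ C j, ∀ w ∈ S, scale (patternRadius F) j < cellDist i w)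
    {k : ℕ} (hk : k ≤ K) (hs : Simulates (scale (patternRadius F) k) φ z z')
    (him : ∀ u ∈ coloured z, φ u ∈ C k) (hfin : (coloured z').Finite)
    (hcard : (coloured z').ncard + 2 * k ≤ SZ) (h : Forces m F Set.univ k z) :
    Forces m F EA k z' := by
  induction k generalizing φ z z' with
  | zero => exact hs.isFinal (two_mul_le_scale _ _) h
  | succ k ih =>
    rcases h with hz | ⟨a, ha, hb⟩
    · exact Or.inl (hs.isFinal (two_mul_le_scale _ _) hz)
    have hC' := hC k (by omega)
    obtain ⟨i, hiC, hi⟩ := hroom (k + 1) hk hfin.toFinset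
      (by rw [← Set.ncard_eq_toFinset_card _ hfin]; omega)
    rw [scale_succ] at hs hC' hi
    obtain ⟨a', φ₁, ha', hs₁, hanch⟩ :=
      hs.exists_move him hC' ⟨i, hiC, fun w hw => hi w (by simpa using hw)⟩ ha
    refine Or.inr ⟨a', legalMove_mono (hCE k) ha', fun b' hb' => ?_⟩
    obtain ⟨b, φ₂, hb', hs₂, him₂⟩ := hs₁.exists_reply hanch hC' hb'
    obtain ⟨w₁, hw₁⟩ := exists_coloured_applyMove_subset z' a'
    obtain ⟨w₂, hw₂⟩ := exists_coloured_applyMove_subset (applyMove z' a') b'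
    have hsub :
        coloured (applyMove (applyMove z' a') b') ⊆ insert w₂ (insert w₁ (coloured z')) :=
      hw₂.trans (Set.insert_subset_insert hw₁)
    have hfin' := (hfin.insert w₁).insert w₂
    have hcard' := (Set.ncard_le_ncard hsub hfin').trans <| (Set.ncard_insert_le _ _).trans <|
      Nat.add_le_add_right (Set.ncard_insert_le _ _) 1
    exact ih (by omega) hs₂ him₂ (hfin'.subset hsub) (by omega) (hb b hb')

end Transfer

section Compactness

variable {m : ℕ} {F : List (PatternCode d)}

/-- Against a cell far from everything coloured, `A` plays as if it were not there. -/
lemma Forces.update_of_far (hd : 0 < d) {y : Board d} (hy : (coloured y).Finite) {k : ℕ}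
    {i : Cell d} (hfar : ∀ u ∈ coloured y, scale (patternRadius F) k < cellDist i u) (c : ℕ)
    (h : Forces m F Set.univ k y) : Forces m F Set.univ k (update y i (some c)) := by
  have hs : Simulates (scale (patternRadius F) k) id y (update y i (some c)) := by
    refine ⟨fun u hu => ?_, fun _ _ _ _ _ => rfl, fun _ _ _ _ _ => rfl, fun w hw => ?_⟩
    · have : u ≠ i := by rintro rfl; simpa using hfar u hu
      simp [this]
    · rw [coloured_update] at hw
      obtain rfl | hw := hw
      · exact Or.inr hfar
      · exact Or.inl ⟨w, hw, rfl⟩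
  refine Forces.of_simulates (C := fun _ => Set.univ) (K := k)
    (SZ := (coloured (update y i (some c))).ncard + 2 * k) (fun _ => subset_rfl)
    (fun _ _ _ _ _ _ => trivial) (fun j _ S _ => ?_) le_rfl hs (fun _ _ => trivial) ?_ le_rfl h
  · obtain ⟨x, -, hx⟩ := exists_far_mem_box hd S (r := scale (patternRadius F) j)
      (n := S.card * (2 * scale (patternRadius F) j + 1)) (by omega)
    exact ⟨x, trivial, hx⟩
  · rw [coloured_update]
    exact hy.insert i

/-- Replies far from the coloured cells are no better for `B` than passing, and there are only
finitely many others. -/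
lemma exists_forces_of_forall_reply (hd : 0 < d) {x : Board d} (hx : (coloured x).Finite)
    {a : MoveD d} (ha : legalMove m Set.univ x a)
    (hreply : ∀ b, legalMove m Set.univ (applyMove x a) b →
      ∃ k, Forces m F Set.univ k (applyMove (applyMove x a) b)) :
    ∃ k, Forces m F Set.univ k x := by
  set y := applyMove x a
  have hy : (coloured y).Finite := by
    obtain ⟨w, hw⟩ := exists_coloured_applyMove_subset x a
    exact (hx.insert w).subset hw
  have hbound :
      ∀ b, ∃ k, legalMove m Set.univ y b → Forces m F Set.univ k (applyMove y b) := by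
    intro b
    by_cases hb : legalMove m Set.univ y b
    · obtain ⟨k, hk⟩ := hreply b hb
      exact ⟨k, fun _ => hk⟩
    · exact ⟨0, fun h => absurd h hb⟩
  choose g hg using hbound
  let near := ⋃ u ∈ coloured y, {i | cellDist i u ≤ scale (patternRadius F) (g none)}
  have hnear : (some '' near ×ˢ Set.Iio m).Finite :=
    ((hy.biUnion fun u _ => finite_setOf_cellDist_le u _).prod (Set.finite_Iio m)).image _
  obtain ⟨K, hK⟩ := (hnear.image g).bddAbove
  refine ⟨max (g none) K + 1, Or.inr ⟨a, ha, fun b hb => ?_⟩⟩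
  rcases b with _ | ⟨i, c⟩
  · exact (hg none hb).mono (by omega)
  by_cases hi : i ∈ near
  · have := hK ⟨_, ⟨(i, c), ⟨hi, hb.2.2⟩, rfl⟩, rfl⟩
    exact (hg _ hb).mono (by omega)
  · simp only [near, Set.mem_iUnion, Set.mem_ofPred_eq, not_exists, not_le] at hi
    exact ((hg none trivial).update_of_far hd hy hi c).mono (by omega)

theorem exists_forces_of_aWins (hd : 0 < d) (h : AWins m F Set.univ alt) :
    ∃ k, Forces m F Set.univ k (emptyBoard d) := by
  obtain ⟨stA, hA⟩ := h
  by_contra! hne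
  let stB : Strategy d := fun y => open Classical in
    if hg : ∃ b, legalMove m Set.univ y b ∧ ∀ k, ¬ Forces m F Set.univ k (applyMove y b)
    then hg.choose else none
  let x (t : ℕ) := play m Set.univ alt stA stB t
  have hodd : ∀ j, ∃ a, legalMove m Set.univ (x (2 * j)) a ∧
      x (2 * j + 1) = applyMove (x (2 * j)) a := fun j => by
    obtain ⟨a, ha, hstep⟩ := exists_legalMove_step_eq (m := m) (E := Set.univ) stA (x (2 * j))
    exact ⟨a, ha, (play_two_mul_add_one stA stB j).trans hstep⟩
  have heven : ∀ j k, ¬ Forces m F Set.univ k (x (2 * j)) := by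
    intro j
    induction j with
    | zero => exact hne
    | succ j ih =>
      obtain ⟨a, ha, hxa⟩ := hodd j
      have hg : ∃ b, legalMove m Set.univ (x (2 * j + 1)) b ∧
          ∀ k, ¬ Forces m F Set.univ k (applyMove (x (2 * j + 1)) b) := by
        by_contra! hall
        rw [hxa] at hall
        obtain ⟨k, hk⟩ :=
          exists_forces_of_forall_reply hd (finite_coloured_play _ _ _ _) ha hall
        exact ih k hk
      have hB : stB (x (2 * j + 1)) = hg.choose := dif_pos hg
      have hx : x (2 * (j + 1)) = applyMove (x (2 * j + 1)) hg.choose := by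
        rw [show 2 * (j + 1) = 2 * j + 2 by ring]
        simp only [x]
        rw [play_two_mul_add_two, step_eq_applyMove (hB ▸ hg.choose_spec.1), hB]
      rw [hx]
      exact hg.choose_spec.2
  obtain ⟨t, ht⟩ := hA stB
  obtain ⟨j, rfl | rfl⟩ := Nat.even_or_odd' t
  · exact heven j 0 ht
  · obtain ⟨a, ha, hxa⟩ := hodd j
    exact heven j 1 (Or.inr ⟨a, ha, fun b hb => isFinal_applyMove hb (hxa ▸ ht)⟩)

end Compactness

section Localisation

variable {m : ℕ} {F : List (PatternCode d)}

/-- The regions are boxes growing by `scale K` per round played, the first one with room for the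
`2K` cells coloured during the game. -/
theorem exists_forces_box (hd : 0 < d) {K : ℕ} (h : Forces m F Set.univ K (emptyBoard d)) :
    ∃ n, Forces m F (box d n) K (emptyBoard d) := by
  set r := scale (patternRadius F) K
  let N : ℕ → ℕ := fun j => 2 * K * (2 * r + 1) + r * (K - j)
  have hN : ∀ j, N j ≤ N 0 := fun j => by
    have := Nat.mul_le_mul_left r (Nat.sub_le_sub_left (Nat.zero_le j) K)
    simp only [N]
    omega
  have hempty : Simulates (scale (patternRadius F) K) id (emptyBoard d) (emptyBoard d) :=
    ⟨by simp, by simp, by simp, by simp⟩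
  refine ⟨N 0, Forces.of_simulates (C := fun j => box d (N j)) (SZ := 2 * K)
    (fun j => box_mono (hN j)) (fun j hj u hu w hw => ?_) (fun j hj S hS => ?_) le_rfl hempty
    (by simp) (by simp) (by simp) h⟩
  · have hscale : scale (patternRadius F) (j + 1) ≤ r := scale_mono _ hj
    have hstep : r * (K - j) = r * (K - (j + 1)) + r := by
      rw [show K - j = K - (j + 1) + 1 by omega]; ring
    refine box_mono ?_ (mem_box_of_cellDist_le hu hw)
    simp only [N]
    omega
  · obtain ⟨x, hx, hfar⟩ := exists_far_mem_box hd S (r := r) (n := 2 * K * (2 * r + 1))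
      (by generalize 2 * r + 1 = q; nlinarith)
    exact ⟨x, box_mono (by simp only [N]; omega) hx,
      fun w hw => (scale_mono _ hj).trans_lt (hfar w hw)⟩

end Localisation

/-- `ℤ⁰` has a single cell, which `A` can colour at once as in a won play against a passive
`B`. -/
lemma exists_forces_of_aWins_dim_zero {m : ℕ} {F : List (PatternCode 0)}
    (h : AWins m F Set.univ alt) : ∃ k, Forces m F Set.univ k (emptyBoard 0) := by
  obtain ⟨stA, hA⟩ := h
  obtain ⟨t, ht⟩ := hA fun _ => none
  set x := play m Set.univ alt stA (fun _ => none) t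
  have hx : ∀ y : Board 0, y 0 = x 0 → y = x := fun y hy =>
    funext fun i => by rwa [Subsingleton.elim i 0]
  rcases hx0 : x 0 with _ | c
  · exact ⟨0, (hx (emptyBoard 0) (by rw [hx0]; rfl)).symm ▸ ht⟩
  · refine ⟨1, Or.inr ⟨some (0, c), ⟨trivial, rfl, lt_of_play_eq_some _ _ _ _ hx0⟩,
      fun b hb => isFinal_applyMove hb ?_⟩⟩
    rwa [hx (applyMove _ _) (by rw [hx0, applyMove_some, Function.update_self])]

end DominoGame

open DominoGame

/-- If `A` wins the Domino game on `ℤ^d`, then the game value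
is finite: `A` has a strategy winning within `T` moves for some `T ∈ ℕ`; moreover
`A` has a winning strategy that only plays cells inside some box `⟦-n, n⟧^d`. -/
theorem aWins_finite_value (d m : ℕ) (F : List (PatternCode d))
    (h : AWins m F Set.univ alt) :
    (∃ T : ℕ, ∃ stA : Strategy d, ∀ stB : Strategy d,
        ∃ t ≤ T, isFinal F (play m Set.univ alt stA stB t)) ∧
    (∃ n : ℕ, ∃ stA : Strategy d,
        (∀ (x : Board d) (i : Cell d) (a : ℕ), stA x = some (i, a) → i ∈ box d n) ∧
        ∀ stB : Strategy d, ∃ t : ℕ, isFinal F (play m Set.univ alt stA stB t)) := by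
  obtain ⟨K, n, hK⟩ : ∃ K n, Forces m F (box d n) K (emptyBoard d) := by
    rcases Nat.eq_zero_or_pos d with rfl | hd
    · obtain ⟨K, hK⟩ := exists_forces_of_aWins_dim_zero h
      have hbox : box 0 0 = Set.univ := Set.eq_univ_of_forall fun _ k => k.elim0
      exact ⟨K, 0, hbox ▸ hK⟩
    · obtain ⟨K, hK⟩ := exists_forces_of_aWins hd h
      exact ⟨K, exists_forces_box hd hK⟩
  have hwin := isFinal_play_forcingStrategy hK
  exact ⟨⟨2 * K, forcingStrategy m F (box d n), fun stB => ⟨2 * K, le_rfl, hwin stB⟩⟩,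
    ⟨n, forcingStrategy m F (box d n), fun _ _ _ => forcingStrategy_mem,
      fun stB => ⟨2 * K, hwin stB⟩⟩⟩
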